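/- In the local-coordinate Lorentzian setting, assume u is a unit timelike torse-forming vector field on U with scalar φ, and let S be a smooth scalar field on U satisfying ∂_j S + u_j Ṡ = 0 on U. Then the covariant Hessian satisfies ∇_j∇_k S = −φṠ·g_{jk} + (S̈ − φṠ)·u_j u_k on U, and consequently g^{jk}∇_j∇_k S = −(n−1)φṠ − S̈. -/

import Mathlib

noncomputable section
open scoped BigOperators

namespace GRWPaper

/-- Points of the local chart `U ⊆ ℝⁿ`. -/
abbrev Pt (n : ℕ) := Fin n → ℝ

variable {n : ℕ}

/-- Partial derivative `∂_i f` at `x`. -/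
def pd (f : Pt n → ℝ) (i : Fin n) (x : Pt n) : ℝ :=
  fderiv ℝ f x (Pi.single i 1)

/-- `Ṡ = u^m ∂_m S`. -/
def udot (u : Pt n → Fin n → ℝ) (S : Pt n → ℝ) (x : Pt n) : ℝ :=
  ∑ m, u x m * pd S m x

/-- Lowered components `u_k = g_{kj} u^j`. -/
def low (g : Pt n → Matrix (Fin n) (Fin n) ℝ) (u : Pt n → Fin n → ℝ)
    (x : Pt n) (k : Fin n) : ℝ :=
  ∑ j, g x k j * u x j

/-- Christoffel symbols `Γ^m_{ij} = ½ g^{ml}(∂_i g_{jl} + ∂_j g_{il} − ∂_l g_{ij})`. -/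
def Chr (g ginv : Pt n → Matrix (Fin n) (Fin n) ℝ) (m i j : Fin n) (x : Pt n) : ℝ :=
  (1/2) * ∑ l, ginv x m l *
    (pd (fun y => g y j l) i x + pd (fun y => g y i l) j x - pd (fun y => g y i j) l x)

/-- Covariant derivative of a covector field: `∇_k w_l = ∂_k w_l − Γ^m_{kl} w_m`. -/
def covdCo (g ginv : Pt n → Matrix (Fin n) (Fin n) ℝ) (w : Pt n → Fin n → ℝ)
    (k l : Fin n) (x : Pt n) : ℝ :=
  pd (fun y => w y l) k x - ∑ m, Chr g ginv m k l x * w x m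

/-- Covariant Hessian of a scalar: `∇_k∇_l S = ∂_k∂_l S − Γ^m_{kl} ∂_m S`. -/
def hess (g ginv : Pt n → Matrix (Fin n) (Fin n) ℝ) (S : Pt n → ℝ)
    (k l : Fin n) (x : Pt n) : ℝ :=
  pd (fun y => pd S l y) k x - ∑ m, Chr g ginv m k l x * pd S m x

/-- Riemann tensor `R_{jkl}{}^m`, normalized so that
`∇_j∇_k w_l − ∇_k∇_j w_l = R_{jkl}{}^m w_m` for all covector fields `w`. -/
def Riem (g ginv : Pt n → Matrix (Fin n) (Fin n) ℝ) (j k l m : Fin n) (x : Pt n) : ℝ :=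
  pd (fun y => Chr g ginv m j l y) k x - pd (fun y => Chr g ginv m k l y) j x
    + ∑ a, Chr g ginv a j l x * Chr g ginv m k a x
    - ∑ a, Chr g ginv a k l x * Chr g ginv m j a x

/-- Ricci tensor `R_{kl} = R_{jkl}{}^j`. -/
def RicT (g ginv : Pt n → Matrix (Fin n) (Fin n) ℝ) (k l : Fin n) (x : Pt n) : ℝ :=
  ∑ j, Riem g ginv j k l j x

/-- Scalar curvature `R = g^{kl} R_{kl}`. -/
def ScalC (g ginv : Pt n → Matrix (Fin n) (Fin n) ℝ) (x : Pt n) : ℝ :=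
  ∑ k, ∑ l, ginv x k l * RicT g ginv k l x

/-- `R_j{}^m = g^{ma} R_{ja}`. -/
def RicUp (g ginv : Pt n → Matrix (Fin n) (Fin n) ℝ) (j m : Fin n) (x : Pt n) : ℝ :=
  ∑ a, ginv x m a * RicT g ginv j a x

/-- Weyl tensor `C_{jkl}{}^m`. -/
def Weyl (g ginv : Pt n → Matrix (Fin n) (Fin n) ℝ) (j k l m : Fin n) (x : Pt n) : ℝ :=
  Riem g ginv j k l m x
    + ((if j = m then RicT g ginv k l x else 0) - (if k = m then RicT g ginv j l x else 0)
        + RicUp g ginv j m x * g x k l - RicUp g ginv k m x * g x j l) / ((n : ℝ) - 2)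
    - ScalC g ginv x * ((if j = m then g x k l else 0) - (if k = m then g x j l else 0))
        / (((n : ℝ) - 1) * ((n : ℝ) - 2))

/-- Covariant divergence `∇_m C_{jkl}{}^m` of the Weyl tensor. -/
def divWeyl (g ginv : Pt n → Matrix (Fin n) (Fin n) ℝ) (j k l : Fin n) (x : Pt n) : ℝ :=
  ∑ m, (pd (fun y => Weyl g ginv j k l m y) m x
    - ∑ a, Chr g ginv a m j x * Weyl g ginv a k l m x
    - ∑ a, Chr g ginv a m k x * Weyl g ginv j a l m x
    - ∑ a, Chr g ginv a m l x * Weyl g ginv j k a m x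
    + ∑ a, Chr g ginv m m a x * Weyl g ginv j k l a x)

/-- Covariant derivative of a (0,2) tensor: `∇_i T_{kl}`. -/
def covd2T (g ginv : Pt n → Matrix (Fin n) (Fin n) ℝ) (T : Pt n → Fin n → Fin n → ℝ)
    (i k l : Fin n) (x : Pt n) : ℝ :=
  pd (fun y => T y k l) i x - ∑ a, Chr g ginv a i k x * T x a l
    - ∑ a, Chr g ginv a i l x * T x k a

/-- Covariant derivative of a (0,3) tensor: `∇_i T_{jkl}`. -/
def covd3T (g ginv : Pt n → Matrix (Fin n) (Fin n) ℝ)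
    (T : Pt n → Fin n → Fin n → Fin n → ℝ) (i j k l : Fin n) (x : Pt n) : ℝ :=
  pd (fun y => T y j k l) i x - ∑ a, Chr g ginv a i j x * T x a k l
    - ∑ a, Chr g ginv a i k x * T x j a l - ∑ a, Chr g ginv a i l x * T x j k a

/-- Second covariant derivative of a (0,2) tensor: `∇_i∇_j T_{kl}`. -/
def covdcovdT (g ginv : Pt n → Matrix (Fin n) (Fin n) ℝ) (T : Pt n → Fin n → Fin n → ℝ)
    (i j k l : Fin n) (x : Pt n) : ℝ :=
  covd3T g ginv (fun y a b c => covd2T g ginv T a b c y) i j k l x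

/-- Covariant Laplacian of a (0,2) tensor: `g^{ab} ∇_a∇_b T_{kl}`. -/
def lap2T (g ginv : Pt n → Matrix (Fin n) (Fin n) ℝ) (T : Pt n → Fin n → Fin n → ℝ)
    (k l : Fin n) (x : Pt n) : ℝ :=
  ∑ a, ∑ b, ginv x a b * covdcovdT g ginv T a b k l x

/-- All-lowered Riemann tensor `R_{jklm} = R_{jkl}{}^p g_{pm}`. -/
def RiemLow (g ginv : Pt n → Matrix (Fin n) (Fin n) ℝ) (j k l m : Fin n) (x : Pt n) : ℝ :=
  ∑ p, Riem g ginv j k l p x * g x p m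


/-! ### Auxiliary lemmas for `stmt5` -/

section Stmt5Aux

variable {U : Set (Pt n)} {x : Pt n}

lemma pd_eventuallyEq (hU : IsOpen U) (hx : x ∈ U) {f h : Pt n → ℝ}
    (hfh : ∀ y ∈ U, f y = h y) (j : Fin n) : pd f j x = pd h j x := by
  unfold pd
  rw [Filter.EventuallyEq.fderiv_eq (((hU.eventually_mem hx).mono fun y hy => hfh y hy))]

lemma pd_neg (f : Pt n → ℝ) (j : Fin n) (x : Pt n) :
    pd (fun y => -f y) j x = -pd f j x := by
  unfold pd
  rw [fderiv_fun_neg]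
  simp

lemma pd_mul {f h : Pt n → ℝ} (hf : DifferentiableAt ℝ f x)
    (hh : DifferentiableAt ℝ h x) (j : Fin n) :
    pd (fun y => f y * h y) j x = f x * pd h j x + h x * pd f j x := by
  unfold pd
  rw [fderiv_fun_mul hf hh]
  simp

lemma diffAt_of (hU : IsOpen U) {f : Pt n → ℝ} (hf : ContDiffOn ℝ (⊤ : ℕ∞) f U)
    (hx : x ∈ U) : DifferentiableAt ℝ f x :=
  (hf.contDiffAt (hU.mem_nhds hx)).differentiableAt (by simp)

lemma contDiffOn_pd (hU : IsOpen U) {f : Pt n → ℝ} (hf : ContDiffOn ℝ (⊤ : ℕ∞) f U)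
    (j : Fin n) : ContDiffOn ℝ (⊤ : ℕ∞) (fun y => pd f j y) U := by
  have h1 : ContDiffOn ℝ (⊤ : ℕ∞) (fderiv ℝ f) U := hf.fderiv_of_isOpen hU (by simp)
  exact h1.clm_apply contDiffOn_const

lemma pd_comm (hU : IsOpen U) {f : Pt n → ℝ} (hf : ContDiffOn ℝ (⊤ : ℕ∞) f U)
    (hx : x ∈ U) (k l : Fin n) :
    pd (fun y => pd f l y) k x = pd (fun y => pd f k y) l x := by
  have hc : ContDiffAt ℝ (⊤ : ℕ∞) f x := hf.contDiffAt (hU.mem_nhds hx)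
  have hsym : IsSymmSndFDerivAt ℝ f x := hc.isSymmSndFDerivAt (by
    rw [minSmoothness_of_isRCLikeNormedField]; exact WithTop.coe_le_coe.mpr le_top)
  have hd : DifferentiableAt ℝ (fderiv ℝ f) x :=
    (hc.fderiv_right (m := 1) (WithTop.coe_le_coe.mpr le_top)).differentiableAt one_ne_zero
  have key : ∀ a b : Fin n, pd (fun y => pd f b y) a x
      = fderiv ℝ (fderiv ℝ f) x (Pi.single a 1) (Pi.single b 1) := by
    intro a b
    have h := fderiv_clm_apply (𝕜 := ℝ) (c := fderiv ℝ f)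
      (u := fun _ => (Pi.single b 1 : Pt n)) hd (differentiableAt_const _)
    calc pd (fun y => pd f b y) a x
        = (fderiv ℝ (fun y => fderiv ℝ f y ((fun _ => (Pi.single b 1 : Pt n)) y)) x)
            (Pi.single a 1) := rfl
      _ = fderiv ℝ (fderiv ℝ f) x (Pi.single a 1) (Pi.single b 1) := by
          rw [h]; simp
  rw [key, key, hsym (Pi.single k 1) (Pi.single l 1)]

end Stmt5Aux

/-- Lemma 4.1 of the paper: Hessian of a scalar obeying condition C1
in presence of a unit timelike torse-forming vector field. -/
theorem stmt5
    (n : ℕ) (hn : 3 ≤ n)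
    (U : Set (Pt n)) (hU : IsOpen U)
    (g ginv : Pt n → Matrix (Fin n) (Fin n) ℝ)
    (hg_smooth : ∀ i j, ContDiffOn ℝ (⊤ : ℕ∞) (fun x => g x i j) U)
    (hginv_smooth : ∀ i j, ContDiffOn ℝ (⊤ : ℕ∞) (fun x => ginv x i j) U)
    (hg_symm : ∀ x ∈ U, ∀ i j, g x i j = g x j i)
    (hginv : ∀ x ∈ U, g x * ginv x = 1)
    (u : Pt n → Fin n → ℝ) (hu_smooth : ∀ i, ContDiffOn ℝ (⊤ : ℕ∞) (fun x => u x i) U)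
    (hu_unit : ∀ x ∈ U, ∑ i, ∑ j, g x i j * u x i * u x j = -1)
    (φ : Pt n → ℝ) (hφ_smooth : ContDiffOn ℝ (⊤ : ℕ∞) φ U)
    (htf : ∀ x ∈ U, ∀ k l, covdCo g ginv (low g u) k l x
        = φ x * (g x k l + low g u x k * low g u x l))
    (S : Pt n → ℝ) (hS_smooth : ContDiffOn ℝ (⊤ : ℕ∞) S U)
    (hC1 : ∀ x ∈ U, ∀ j, pd S j x + low g u x j * udot u S x = 0) :
    (∀ x ∈ U, ∀ j k, hess g ginv S j k x
        = -(φ x * udot u S x) * g x j k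
          + (udot u (udot u S) x - φ x * udot u S x) * low g u x j * low g u x k)
    ∧ (∀ x ∈ U, ∑ j, ∑ k, ginv x j k * hess g ginv S j k x
        = -((n : ℝ) - 1) * φ x * udot u S x - udot u (udot u S) x) := by
  -- smoothness / differentiability of the building blocks
  have hlow_smooth : ∀ k, ContDiffOn ℝ (⊤ : ℕ∞) (fun y => low g u y k) U := by
    intro k
    have : ContDiffOn ℝ (⊤ : ℕ∞) (fun y => ∑ j, g y k j * u y j) U :=
      ContDiffOn.sum fun j _ => (hg_smooth k j).mul (hu_smooth j)
    exact this
  have hpdS_smooth : ∀ m, ContDiffOn ℝ (⊤ : ℕ∞) (fun y => pd S m y) U :=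
    fun m => contDiffOn_pd hU hS_smooth m
  have hudot_smooth : ContDiffOn ℝ (⊤ : ℕ∞) (udot u S) U := by
    have : ContDiffOn ℝ (⊤ : ℕ∞) (fun y => ∑ m, u y m * pd S m y) U :=
      ContDiffOn.sum fun m _ => (hu_smooth m).mul (hpdS_smooth m)
    exact this
  have dlow : ∀ x ∈ U, ∀ k, DifferentiableAt ℝ (fun y => low g u y k) x :=
    fun x hx k => diffAt_of hU (hlow_smooth k) hx
  have dudot : ∀ x ∈ U, DifferentiableAt ℝ (udot u S) x :=
    fun x hx => diffAt_of hU hudot_smooth hx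
  -- rearranged hypotheses
  have hpdS_eq : ∀ x ∈ U, ∀ m, pd S m x = -(low g u x m * udot u S x) := by
    intro x hx m
    have := hC1 x hx m
    linarith
  have hpdlow : ∀ x ∈ U, ∀ k l, pd (fun y => low g u y l) k x
      = φ x * (g x k l + low g u x k * low g u x l)
        + ∑ m, Chr g ginv m k l x * low g u x m := by
    intro x hx k l
    have := htf x hx k l
    unfold covdCo at this
    linarith
  -- derivative of ∂_k S using C1
  have hpdpdS : ∀ x ∈ U, ∀ j k, pd (fun y => pd S k y) j x
      = -(pd (fun y => low g u y k) j x * udot u S x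
          + low g u x k * pd (udot u S) j x) := by
    intro x hx j k
    have h1 : pd (fun y => pd S k y) j x
        = pd (fun y => -(low g u y k * udot u S y)) j x :=
      pd_eventuallyEq hU hx (fun y hy => hpdS_eq y hy k) j
    rw [h1, pd_neg, pd_mul (dlow x hx k) (dudot x hx)]
    ring
  -- preliminary Hessian formula
  have hess_formula : ∀ x ∈ U, ∀ j k, hess g ginv S j k x
      = -(udot u S x * (φ x * (g x j k + low g u x j * low g u x k)))
        - low g u x k * pd (udot u S) j x := by
    intro x hx j k
    unfold hess
    have hsum : ∑ m, Chr g ginv m j k x * pd S m x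
        = -((∑ m, Chr g ginv m j k x * low g u x m) * udot u S x) := by
      calc ∑ m, Chr g ginv m j k x * pd S m x
          = ∑ m, (Chr g ginv m j k x * low g u x m) * (-(udot u S x)) :=
          Finset.sum_congr rfl fun m _ => by rw [hpdS_eq x hx m]; ring
        _ = (∑ m, Chr g ginv m j k x * low g u x m) * (-(udot u S x)) :=
          (Finset.sum_mul _ _ _).symm
        _ = -((∑ m, Chr g ginv m j k x * low g u x m) * udot u S x) := by ring
    rw [hpdpdS x hx j k, hpdlow x hx j k, hsum]
    ring
  -- symmetry of the Christoffel symbols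
  have hChr_symm : ∀ x ∈ U, ∀ m j k, Chr g ginv m j k x = Chr g ginv m k j x := by
    intro x hx m j k
    unfold Chr
    congr 1
    refine Finset.sum_congr rfl fun l _ => ?_
    have h1 : pd (fun y => g y j k) l x = pd (fun y => g y k j) l x :=
      pd_eventuallyEq hU hx (fun y hy => hg_symm y hy j k) l
    rw [h1]
    ring
  -- symmetry of the Hessian
  have hess_symm : ∀ x ∈ U, ∀ j k, hess g ginv S j k x = hess g ginv S k j x := by
    intro x hx j k
    unfold hess
    rw [pd_comm hU hS_smooth hx j k]
    congr 1
    exact Finset.sum_congr rfl fun m _ => by rw [hChr_symm x hx m j k]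
  -- ∑ u^k u_k = -1
  have hul : ∀ x ∈ U, ∑ k, u x k * low g u x k = -1 := by
    intro x hx
    calc ∑ k, u x k * low g u x k
        = ∑ k, ∑ m, g x k m * u x k * u x m := by
          refine Finset.sum_congr rfl fun k _ => ?_
          unfold low
          rw [Finset.mul_sum]
          exact Finset.sum_congr rfl fun m _ => by ring
      _ = -1 := hu_unit x hx
  -- derivative of Ṡ
  have hpdudot : ∀ x ∈ U, ∀ j, pd (udot u S) j x
      = -(low g u x j * udot u (udot u S) x) := by
    intro x hx j
    have hswap : ∀ k, low g u x k * pd (udot u S) j x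
        = low g u x j * pd (udot u S) k x := by
      intro k
      have h1 := hess_formula x hx j k
      have h2 := hess_formula x hx k j
      have h3 := hess_symm x hx j k
      have hg' := hg_symm x hx j k
      linear_combination h1 - h2 - h3 - (udot u S x * φ x) * hg'
    have h4 : ∑ k, u x k * (low g u x k * pd (udot u S) j x)
        = ∑ k, u x k * (low g u x j * pd (udot u S) k x) :=
      Finset.sum_congr rfl fun k _ => by rw [hswap k]
    have hL : ∑ k, u x k * (low g u x k * pd (udot u S) j x)
        = (∑ k, u x k * low g u x k) * pd (udot u S) j x := by
      rw [Finset.sum_mul]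
      exact Finset.sum_congr rfl fun k _ => by ring
    have hR : ∑ k, u x k * (low g u x j * pd (udot u S) k x)
        = low g u x j * udot u (udot u S) x := by
      have hdef : udot u (udot u S) x = ∑ k, u x k * pd (udot u S) k x := rfl
      rw [hdef, Finset.mul_sum]
      exact Finset.sum_congr rfl fun k _ => by ring
    rw [hL, hR, hul x hx] at h4
    linarith
  -- first statement
  have main : ∀ x ∈ U, ∀ j k, hess g ginv S j k x
      = -(φ x * udot u S x) * g x j k
        + (udot u (udot u S) x - φ x * udot u S x) * low g u x j * low g u x k := by
    intro x hx j k
    rw [hess_formula x hx j k, hpdudot x hx j]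
    ring
  refine ⟨main, ?_⟩
  -- second statement: trace
  intro x hx
  have hinv2 : ginv x * g x = 1 := mul_eq_one_comm.mp (hginv x hx)
  have hkey : ∀ j a, ∑ k, ginv x j k * g x k a = if j = a then 1 else 0 := by
    intro j a
    have := congrArg (fun M : Matrix (Fin n) (Fin n) ℝ => M j a) hinv2
    simpa [Matrix.mul_apply, Matrix.one_apply] using this
  have T1 : ∑ j, ∑ k, ginv x j k * g x j k = (n : ℝ) := by
    have h1 : ∀ j, ∑ k, ginv x j k * g x j k = 1 := by
      intro j
      calc ∑ k, ginv x j k * g x j k = ∑ k, ginv x j k * g x k j :=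
          Finset.sum_congr rfl fun k _ => by rw [hg_symm x hx j k]
        _ = 1 := by simpa using hkey j j
    rw [Finset.sum_congr rfl fun j _ => h1 j]
    simp
  have hulow : ∀ j, ∑ k, ginv x j k * low g u x k = u x j := by
    intro j
    calc ∑ k, ginv x j k * low g u x k
        = ∑ k, ∑ a, ginv x j k * (g x k a * u x a) := by
          refine Finset.sum_congr rfl fun k _ => ?_
          unfold low
          rw [Finset.mul_sum]
      _ = ∑ a, (∑ k, ginv x j k * g x k a) * u x a := by
          rw [Finset.sum_comm]
          refine Finset.sum_congr rfl fun a _ => ?_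
          rw [Finset.sum_mul]
          exact Finset.sum_congr rfl fun k _ => by ring
      _ = ∑ a, (if j = a then (1:ℝ) else 0) * u x a :=
          Finset.sum_congr rfl fun a _ => by rw [hkey j a]
      _ = u x j := by simp
  have T2 : ∑ j, ∑ k, ginv x j k * (low g u x j * low g u x k) = -1 := by
    have h5 : ∀ j, ∑ k, ginv x j k * (low g u x j * low g u x k)
        = low g u x j * u x j := by
      intro j
      calc ∑ k, ginv x j k * (low g u x j * low g u x k)
          = low g u x j * ∑ k, ginv x j k * low g u x k := by
            rw [Finset.mul_sum]
            exact Finset.sum_congr rfl fun k _ => by ring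
        _ = low g u x j * u x j := by rw [hulow j]
    rw [Finset.sum_congr rfl fun j _ => h5 j]
    calc ∑ j, low g u x j * u x j = ∑ j, u x j * low g u x j :=
        Finset.sum_congr rfl fun j _ => by ring
      _ = -1 := hul x hx
  calc ∑ j, ∑ k, ginv x j k * hess g ginv S j k x
      = ∑ j, ∑ k, (-(φ x * udot u S x) * (ginv x j k * g x j k)
          + (udot u (udot u S) x - φ x * udot u S x)
              * (ginv x j k * (low g u x j * low g u x k))) := by
        refine Finset.sum_congr rfl fun j _ => Finset.sum_congr rfl fun k _ => ?_
        rw [main x hx j k]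
        ring
    _ = -(φ x * udot u S x) * ∑ j, ∑ k, ginv x j k * g x j k
          + (udot u (udot u S) x - φ x * udot u S x)
              * ∑ j, ∑ k, ginv x j k * (low g u x j * low g u x k) := by
        simp only [Finset.sum_add_distrib, ← Finset.mul_sum]
    _ = -((n : ℝ) - 1) * φ x * udot u S x - udot u (udot u S) x := by
        rw [T1, T2]
        ring
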